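/- arXiv:0704.0783 — 2 statements merged into one kernel-verified Lean document; each statement's English description precedes it below -/
import Mathlib

section
/- Edge-midpoint gradient formula on a triangle: let K ⊂ ℝ² be a nondegenerate triangle (the convex hull of three affinely independent points), with area |K|, edges σ₁, σ₂, σ₃ of lengths |σ₁|, |σ₂|, |σ₃|, edge midpoints x_{σ₁}, x_{σ₂}, x_{σ₃}, and outward unit normals n₁, n₂, n₃. Then for every affine function q: ℝ² → ℝ, whose gradient ∇q is a constant vector, one has |K| ∇q = ∑_{i=1}^3 |σ_i| q(x_{σ_i}) n_i. -/
open scoped RealInnerProductSpace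
open MeasureTheory

noncomputable section

/-- The Euclidean plane. -/
abbrev E2 : Type := EuclideanSpace ℝ (Fin 2)

/-- A nondegenerate triangle of the plane, given by its three affinely
independent vertices.  Its edge `σ_i` joins the vertices `vtx (i+1)` and `vtx (i+2)`. -/
structure Tri : Type where
  vtx : Fin 3 → E2
  indep : AffineIndependent ℝ vtx

/-- The triangle as a subset of the plane: the convex hull of its vertices. -/
def Tri.carrier (t : Tri) : Set E2 := convexHull ℝ (Set.range t.vtx)

/-- The area `|K|` of the triangle. -/
def Tri.area (t : Tri) : ℝ := (volume t.carrier).toReal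

/-! Orient the plane so that `ω a b > 0`, where `a = v₁ - v₀`, `b = v₂ - v₀`, `ω` is the area
form and `J` the rotation by `π / 2`. The outward unit normal of the edge vector
`eᵢ = v_{i+1} - v_{i+2}` is then `nᵢ = J eᵢ / |σᵢ|`, so the right-hand side is `J (∑ q(x_{σᵢ}) eᵢ)`.
As `∑ eᵢ = 0`, the constant part of `q` drops out and the sum is `½ (⟪g, b⟫ a - ⟪g, a⟫ b)`, which
`J` maps to `½ ω a b • g`. Finally `|K| = ½ ω a b`, because the triangle and its point reflection
through the midpoint of `[v₁, v₂]` tile the parallelogram spanned by `a` and `b`. -/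

open Module Set
open scoped Pointwise

theorem AffineIndependent.linearIndependent_vsub_fin_three {k V P : Type*} [Ring k]
    [AddCommGroup V] [Module k V] [AddTorsor V P] {p : Fin 3 → P} (h : AffineIndependent k p) :
    LinearIndependent k ![p 1 -ᵥ p 0, p 2 -ᵥ p 0] := by
  rw [affineIndependent_iff_linearIndependent_vsub k p 0,
    ← linearIndependent_equiv (finSuccAboveEquiv (0 : Fin 3))] at h
  convert h using 1
  ext i
  fin_cases i <;> rfl

section ConvexHull

variable {E : Type*} [AddCommGroup E] [Module ℝ E]

theorem mem_convexHull_zero_pair {u w x : E} :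
    x ∈ convexHull ℝ {0, u, w} ↔ ∃ s r : ℝ, 0 ≤ s ∧ 0 ≤ r ∧ s + r ≤ 1 ∧ s • u + r • w = x := by
  constructor
  · refine fun hx => convexHull_min
      (t := {x | ∃ s r : ℝ, 0 ≤ s ∧ 0 ≤ r ∧ s + r ≤ 1 ∧ s • u + r • w = x}) ?_ ?_ hx
    · rintro y (rfl | rfl | rfl)
      · exact ⟨0, 0, by simp⟩
      · exact ⟨1, 0, by simp⟩
      · exact ⟨0, 1, by simp⟩
    · rintro _ ⟨s, r, hs, hr, hsr, rfl⟩ _ ⟨s', r', hs', hr', hsr', rfl⟩ a b ha hb hab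
      exact ⟨a * s + b * s', a * r + b * r', by positivity, by positivity, by nlinarith, by module⟩
  · rintro ⟨s, r, hs, hr, hsr, rfl⟩
    have h := (convex_convexHull ℝ ({0, u, w} : Set E)).sum_mem (t := Finset.univ)
      (w := ![1 - s - r, s, r]) (z := ![0, u, w])
      (fun i _ => by fin_cases i <;> simp <;> linarith)
      (by simp [Fin.sum_univ_three]; ring)
      (fun i _ => subset_convexHull ℝ _ (by fin_cases i <;> simp))
    simpa [Fin.sum_univ_three] using h

theorem parallelepiped_pair_eq_union (u w : E) :
    parallelepiped ![u, w] =
      convexHull ℝ {0, u, w} ∪ (fun x => u + w - x) ⁻¹' convexHull ℝ {0, u, w} := by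
  ext x
  simp only [mem_parallelepiped_iff, Fin.sum_univ_two, Matrix.cons_val_zero, Matrix.cons_val_one,
    mem_union, mem_preimage, mem_convexHull_zero_pair]
  constructor
  · rintro ⟨t, ⟨ht0, ht1⟩, rfl⟩
    obtain ⟨hs0, hr0, hs1, hr1⟩ : 0 ≤ t 0 ∧ 0 ≤ t 1 ∧ t 0 ≤ 1 ∧ t 1 ≤ 1 :=
      ⟨ht0 0, ht0 1, ht1 0, ht1 1⟩
    by_cases hst : t 0 + t 1 ≤ 1
    · exact Or.inl ⟨t 0, t 1, hs0, hr0, hst, rfl⟩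
    · exact Or.inr ⟨1 - t 0, 1 - t 1, by linarith, by linarith, by linarith, by module⟩
  · rintro (⟨s, r, hs, hr, hsr, rfl⟩ | ⟨s, r, hs, hr, hsr, hx⟩)
    · refine ⟨![s, r], ⟨fun i => ?_, fun i => ?_⟩, by simp⟩ <;> fin_cases i <;> simp <;> linarith
    · refine ⟨![1 - s, 1 - r], ⟨fun i => ?_, fun i => ?_⟩, ?_⟩
      · fin_cases i <;> simp <;> linarith
      · fin_cases i <;> simp <;> linarith
      · simp only [Matrix.cons_val_zero, Matrix.cons_val_one]
        rw [← sub_eq_zero] at hx ⊢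
        rw [← hx]
        module

theorem convexHull_zero_pair_inter_reflection_subset {u w : E} (h : LinearIndependent ℝ ![u, w]) :
    convexHull ℝ {0, u, w} ∩ (fun x => u + w - x) ⁻¹' convexHull ℝ {0, u, w} ⊆ line[ℝ, w, u] := by
  rintro x ⟨hx, hx'⟩
  simp only [mem_preimage, mem_convexHull_zero_pair] at hx hx'
  obtain ⟨s, r, hs, hr, hsr, rfl⟩ := hx
  obtain ⟨s', r', hs', hr', hsr', hx'⟩ := hx'
  have hcoeff := LinearIndependent.pair_iff.mp h (s - (1 - s')) (r - (1 - r')) (by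
    rw [← sub_eq_zero] at hx'
    rw [← hx']
    module)
  have hrs : r = 1 - s := by linarith [hcoeff.1, hcoeff.2]
  rw [SetLike.mem_coe, show s • u + r • w = AffineMap.lineMap w u s by
    rw [AffineMap.lineMap_apply_module, hrs]; module]
  exact AffineMap.lineMap_mem_affineSpan_pair _ _ _

end ConvexHull

section OrientedPlane

variable {V : Type*} [NormedAddCommGroup V] [InnerProductSpace ℝ V]

theorem sum_affine_midpoint_smul_edge (v : Fin 3 → V) (g : V) (c : ℝ) :
    ∑ i, (⟪g, midpoint ℝ (v (i + 1)) (v (i + 2))⟫ + c) • (v (i + 1) - v (i + 2)) =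
      (1 / 2 : ℝ) • (⟪g, v 2 - v 0⟫ • (v 1 - v 0) - ⟪g, v 1 - v 0⟫ • (v 2 - v 0)) := by
  simp only [Fin.sum_univ_three, Fin.isValue, Fin.reduceAdd, zero_add, midpoint_eq_smul_add,
    invOf_eq_inv, smul_add, inner_add_right, inner_smul_right, inner_sub_right, one_div]
  module

variable [Fact (finrank ℝ V = 2)]

attribute [local instance] FiniteDimensional.of_fact_finrank_eq_two

theorem affineSpan_pair_ne_top (u w : V) : line[ℝ, u, w] ≠ ⊤ := by
  intro h
  have hle := collinear_iff_finrank_le_one.mp (collinear_pair ℝ u w)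
  rw [← direction_affineSpan, h, AffineSubspace.direction_top, finrank_top,
    (Fact.out : finrank ℝ V = 2)] at hle
  omega

namespace Orientation

variable (o : Orientation ℝ V (Fin 2))

local notation "ω" => o.areaForm
local notation "J" => o.rightAngleRotation

theorem norm_sq_smul_eq_inner_smul_add_areaForm_smul (a x : V) :
    ‖a‖ ^ 2 • x = ⟪a, x⟫ • a + ω a x • J a := by
  refine ext_inner_right ℝ fun y => ?_
  rw [inner_add_left, real_inner_smul_left, real_inner_smul_left, real_inner_smul_left,
    inner_rightAngleRotation_left, ← o.inner_mul_inner_add_areaForm_mul_areaForm a x y]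

theorem areaForm_ne_zero_of_linearIndependent {a b : V} (h : LinearIndependent ℝ ![a, b]) :
    ω a b ≠ 0 := by
  intro hab
  have hdep : ⟪a, b⟫ • a + (-‖a‖ ^ 2) • b = 0 := by
    rw [neg_smul, o.norm_sq_smul_eq_inner_smul_add_areaForm_smul, hab, zero_smul, add_zero,
      add_neg_cancel]
  exact h.ne_zero 0 (by simpa using (LinearIndependent.pair_iff.mp h _ _ hdep).2)

theorem rightAngleRotation_inner_smul_sub_inner_smul (a b g : V) :
    J (⟪g, b⟫ • a - ⟪g, a⟫ • b) = ω a b • g := by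
  rcases eq_or_ne g 0 with rfl | hg
  · simp
  refine smul_right_injective V (by positivity : ‖g‖ ^ 2 ≠ 0) ?_
  dsimp only
  rw [← map_smul, smul_sub, smul_comm _ ⟪g, b⟫, smul_comm _ ⟪g, a⟫,
    o.norm_sq_smul_eq_inner_smul_add_areaForm_smul g a,
    o.norm_sq_smul_eq_inner_smul_add_areaForm_smul g b, smul_smul, ← o.inner_mul_areaForm_sub g a b]
  simp only [map_sub, map_add, map_smul, rightAngleRotation_rightAngleRotation]
  module

theorem norm_smul_eq_rightAngleRotation {n e p : V} (hn : ‖n‖ = 1) (hne : ⟪n, e⟫ = 0)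
    (hnp : 0 < ⟪n, p⟫) (hep : 0 < ω e p) : ‖e‖ • n = J e := by
  have he : e ≠ 0 := by rintro rfl; simp at hep
  have hdecomp : ‖e‖ ^ 2 • n = ω e n • J e := by
    rw [o.norm_sq_smul_eq_inner_smul_add_areaForm_smul, real_inner_comm, hne, zero_smul, zero_add]
  have hsign : 0 < ω e n := by
    have h := congrArg (⟪·, p⟫) hdecomp
    simp only [real_inner_smul_left, inner_rightAngleRotation_left] at h
    exact pos_of_mul_pos_left (h ▸ by positivity) hep.le
  have habs : ω e n = ‖e‖ := by
    rw [← abs_of_pos hsign, o.abs_areaForm_of_orthogonal (by rwa [real_inner_comm]), hn, mul_one]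
  rw [habs, pow_two, mul_smul] at hdecomp
  exact smul_right_injective V (norm_ne_zero_iff.mpr he) hdecomp

theorem areaForm_edge_midpoint_sub_vertex (v : Fin 3 → V) (i : Fin 3) :
    ω (v (i + 1) - v (i + 2)) (midpoint ℝ (v (i + 1)) (v (i + 2)) - v i) =
      ω (v 1 - v 0) (v 2 - v 0) := by
  have h01 := o.areaForm_swap (v 0) (v 1)
  have h02 := o.areaForm_swap (v 0) (v 2)
  have h12 := o.areaForm_swap (v 1) (v 2)
  fin_cases i <;> simp [midpoint_eq_smul_add] <;> linarith

variable [MeasurableSpace V] [BorelSpace V]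

theorem volume_parallelepiped_pair (u w : V) :
    volume (parallelepiped ![u, w]) = ENNReal.ofReal |ω u w| := by
  rw [← o.measure_eq_volume, AlternatingMap.measure_parallelepiped, areaForm_to_volumeForm]

theorem volume_convexHull_zero_pair {u w : V} (h : LinearIndependent ℝ ![u, w]) :
    volume (convexHull ℝ {0, u, w}) = ENNReal.ofReal (|ω u w| / 2) := by
  set T := convexHull ℝ ({0, u, w} : Set V)
  set T' := (fun x => u + w - x) ⁻¹' T
  have hT : IsClosed T := ((Set.toFinite _).isCompact_convexHull ℝ).isClosed
  have hT' : IsClosed T' := hT.preimage (continuous_const.sub continuous_id)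
  have hvolT' : volume T' = volume T :=
    (Measure.measurePreserving_sub_left volume (u + w)).measure_preimage hT.nullMeasurableSet
  have hinter : volume (T ∩ T') = 0 :=
    measure_mono_null (convexHull_zero_pair_inter_reflection_subset h)
      (Measure.addHaar_affineSubspace _ _ (affineSpan_pair_ne_top w u))
  have hsum := measure_union_add_inter (μ := volume) T hT'.measurableSet
  rw [← parallelepiped_pair_eq_union, hinter, add_zero, hvolT', volume_parallelepiped_pair] at hsum
  rw [ENNReal.ofReal_div_of_pos two_pos, hsum, ENNReal.ofReal_ofNat, ← mul_two,
    ENNReal.mul_div_cancel_right two_ne_zero ENNReal.ofNat_ne_top]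

theorem volume_convexHull_range_fin_three {v : Fin 3 → V} (h : AffineIndependent ℝ v) :
    volume (convexHull ℝ (range v)) = ENNReal.ofReal (|ω (v 1 - v 0) (v 2 - v 0)| / 2) := by
  have hrange : range v = v 0 +ᵥ ({0, v 1 - v 0, v 2 - v 0} : Set V) := by
    simp only [vadd_set_insert, vadd_set_singleton, vadd_eq_add, add_zero, add_sub_cancel]
    ext x
    simp [Fin.exists_fin_succ, eq_comm]
  rw [hrange, convexHull_vadd, measure_vadd]
  exact o.volume_convexHull_zero_pair h.linearIndependent_vsub_fin_three

end Orientation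

theorem exists_orientation_areaForm_pos {a b : V} (h : LinearIndependent ℝ ![a, b]) :
    ∃ o : Orientation ℝ V (Fin 2), 0 < o.areaForm a b := by
  let o₀ := (finBasisOfFinrankEq ℝ V (Fact.out : finrank ℝ V = 2)).orientation
  rcases (o₀.areaForm_ne_zero_of_linearIndependent h).lt_or_gt with hneg | hpos
  · exact ⟨-o₀, by simpa [Orientation.areaForm_neg_orientation] using hneg⟩
  · exact ⟨o₀, hpos⟩

end OrientedPlane

/-- **Edge-midpoint gradient formula on a triangle**: for a nondegenerate triangle `K`
with edges `σ_i` (of length `|σ_i|`, midpoint `x_{σ_i}` and outward unit normal `n_i`,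
the unit normal of the edge pointing away from the opposite vertex) and every affine
function `q(x) = ⟪g, x⟫ + c`, one has `|K| ∇q = ∑ i, |σ_i| q(x_{σ_i}) n_i`. -/
theorem edge_midpoint_gradient_formula
    (t : Tri) (nrm : Fin 3 → E2)
    (hunit : ∀ i, ‖nrm i‖ = 1)
    (horth : ∀ i, ⟪nrm i, t.vtx (i + 1) - t.vtx (i + 2)⟫ = 0)
    (hout : ∀ i, 0 < ⟪nrm i, midpoint ℝ (t.vtx (i + 1)) (t.vtx (i + 2)) - t.vtx i⟫)
    (g : E2) (c : ℝ) (q : E2 → ℝ) (hq : ∀ x, q x = ⟪g, x⟫ + c) :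
    t.area • g = ∑ i : Fin 3,
      (dist (t.vtx (i + 1)) (t.vtx (i + 2)) *
        q (midpoint ℝ (t.vtx (i + 1)) (t.vtx (i + 2)))) • nrm i := by
  have : Fact (finrank ℝ E2 = 2) := ⟨finrank_euclideanSpace_fin⟩
  obtain ⟨o, hpos⟩ := exists_orientation_areaForm_pos
    t.indep.linearIndependent_vsub_fin_three
  simp only [vsub_eq_sub] at hpos
  have hnormal : ∀ i, dist (t.vtx (i + 1)) (t.vtx (i + 2)) • nrm i =
      o.rightAngleRotation (t.vtx (i + 1) - t.vtx (i + 2)) := fun i => by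
    rw [dist_eq_norm]
    exact o.norm_smul_eq_rightAngleRotation (hunit i) (horth i) (hout i)
      (by rwa [o.areaForm_edge_midpoint_sub_vertex])
  have harea : t.area = o.areaForm (t.vtx 1 - t.vtx 0) (t.vtx 2 - t.vtx 0) / 2 := by
    rw [Tri.area, Tri.carrier, o.volume_convexHull_range_fin_three t.indep,
      ENNReal.toReal_ofReal (by positivity), abs_of_pos hpos]
  simp_rw [mul_comm (dist _ _), mul_smul, hnormal, ← map_smul, ← map_sum, hq,
    sum_affine_midpoint_smul_edge, map_smul, o.rightAngleRotation_inner_smul_sub_inner_smul,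
    harea, smul_smul, one_div, inv_mul_eq_div]

end
end

section
/- Divergence formula for affine vector fields on a triangle: let K ⊂ ℝ² be a nondegenerate triangle with area |K|, edges σ₁, σ₂, σ₃ of lengths |σ_i|, edge midpoints x_{σ_i}, and outward unit normals n_i. Then for every affine map v: ℝ² → ℝ², whose divergence div v is a constant, one has |K| div v = ∑_{i=1}^3 |σ_i| v(x_{σ_i})·n_i. -/
open scoped RealInnerProductSpace
open MeasureTheory

noncomputable section

/-!
Orient the plane and let `ω` be its area form. If `n` is a unit normal of the edge direction
`d = x_{i+1} - x_{i+2}`, then `ω d y = ω d n ⟪n, y⟫` and `|ω d n| = |σ_i|`; the outward condition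
says that `ω d n` has the sign of `D = ω d (x_σ - x_i)`, which is twice the signed area of `K` for
each of the three edges. Hence `|D| |σ_i| ⟪v x_σ, n_i⟫ = D ω d_i (v x_σ)`. Summing over the edges,
the constant part of `v` drops out because `∑ d_i = 0`, and the identity
`ω (A x) y + ω x (A y) = tr A ω x y` turns the rest into `D tr A / 2`. Finally `|K| = |D| / 2`,
since `K` is the image of the standard triangle, half of the unit square, under an affine map of
determinant `D`.
-/

open Module
open scoped Pointwise

namespace Orientation

variable {E : Type*} [NormedAddCommGroup E] [InnerProductSpace ℝ E] [Fact (finrank ℝ E = 2)]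
  (o : Orientation ℝ E (Fin 2))

local notation "ω" => o.areaForm

theorem areaForm_eq_areaForm_mul_inner_of_inner_eq_zero {n d : E} (hn : ‖n‖ = 1)
    (hnd : ⟪n, d⟫ = 0) (y : E) : ω d y = ω d n * ⟪n, y⟫ := by
  have := o.inner_mul_areaForm_sub n d y
  rw [hnd, hn, o.areaForm_swap n d] at this
  linarith

theorem abs_areaForm_eq_norm_mul_inner {n d u : E} (hn : ‖n‖ = 1) (hnd : ⟪n, d⟫ = 0)
    (hnu : 0 < ⟪n, u⟫) : |ω d u| = ‖d‖ * ⟪n, u⟫ := by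
  rw [o.areaForm_eq_areaForm_mul_inner_of_inner_eq_zero hn hnd, abs_mul,
    o.abs_areaForm_of_orthogonal (by rwa [real_inner_comm]), hn, mul_one, abs_of_pos hnu]

theorem abs_areaForm_mul_norm_mul_inner {n d u : E} (w : E) (hn : ‖n‖ = 1) (hnd : ⟪n, d⟫ = 0)
    (hnu : 0 < ⟪n, u⟫) : |ω d u| * (‖d‖ * ⟪w, n⟫) = ω d u * ω d w := by
  have hsq : ω d n ^ 2 = ‖d‖ ^ 2 := by
    rw [← sq_abs, o.abs_areaForm_of_orthogonal (by rwa [real_inner_comm]), hn, mul_one]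
  rw [o.abs_areaForm_eq_norm_mul_inner hn hnd hnu,
    o.areaForm_eq_areaForm_mul_inner_of_inner_eq_zero hn hnd u,
    o.areaForm_eq_areaForm_mul_inner_of_inner_eq_zero hn hnd w, real_inner_comm n w]
  linear_combination (⟪n, u⟫ * ⟪n, w⟫) * hsq.symm

theorem areaForm_map_add_areaForm_map (A : E →ₗ[ℝ] E) (x y : E) :
    ω (A x) y + ω x (A y) = LinearMap.trace ℝ E A * ω x y := by
  let e := o.finOrthonormalBasis two_pos Fact.out
  let b := e.toBasis
  have hω (x y : E) : ω x y = b.repr x 0 * b.repr y 1 - b.repr x 1 * b.repr y 0 := by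
    rw [areaForm_to_volumeForm, o.volumeForm_robust e (o.finOrthonormalBasis_orientation _ _),
      Basis.det_apply, Matrix.det_fin_two]
    simp only [Basis.toMatrix_apply, Matrix.cons_val_zero, Matrix.cons_val_one]
    ring
  have hA (x : E) (i : Fin 2) : b.repr (A x) i = ∑ j, LinearMap.toMatrix b b A i j * b.repr x j :=
    (congrFun (LinearMap.toMatrix_mulVec_repr b b A x) i).symm
  rw [hω, hω, hω, hA, hA, hA, hA, LinearMap.trace_eq_matrix_trace ℝ b, Matrix.trace_fin_two]
  simp only [Fin.sum_univ_two]
  ring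

theorem areaForm_sub_midpoint_sub (p : Fin 3 → E) (i : Fin 3) :
    ω (p (i + 1) - p (i + 2)) (midpoint ℝ (p (i + 1)) (p (i + 2)) - p i)
      = ω (p 1 - p 0) (p 2 - p 0) := by
  fin_cases i <;>
    simp only [Fin.zero_eta, Fin.mk_one, Fin.reduceFinMk, Fin.isValue, Fin.reduceAdd, zero_add,
      midpoint_eq_smul_add, invOf_eq_inv, map_sub, map_add, map_smul, LinearMap.sub_apply,
      smul_eq_mul, areaForm_apply_self, o.areaForm_swap (p 2) (p 1), o.areaForm_swap (p 0) (p 1),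
      o.areaForm_swap (p 0) (p 2)] <;>
    ring

theorem sum_areaForm_sub_map_midpoint_add (p : Fin 3 → E) (A : E →ₗ[ℝ] E) (c : E) :
    ∑ i : Fin 3, ω (p (i + 1) - p (i + 2)) (A (midpoint ℝ (p (i + 1)) (p (i + 2))) + c)
      = LinearMap.trace ℝ E A * ω (p 1 - p 0) (p 2 - p 0) / 2 := by
  have h (i j : Fin 3) :
      ω (p i) (A (p j)) - ω (p j) (A (p i)) = LinearMap.trace ℝ E A * ω (p i) (p j) := by
    rw [← o.areaForm_map_add_areaForm_map, o.areaForm_swap (A (p i))]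
    ring
  simp only [Fin.sum_univ_three, Fin.isValue, Fin.reduceAdd, zero_add, midpoint_eq_smul_add,
    map_add, map_sub, map_smul, LinearMap.sub_apply, smul_eq_mul, invOf_eq_inv,
    areaForm_apply_self]
  linear_combination (1 / 2 : ℝ) * (h 1 2 - h 0 2 + h 0 1)
    + (LinearMap.trace ℝ E A / 2) * o.areaForm_swap (p 1) (p 0)

end Orientation

theorem MeasureTheory.Measure.addHaar_setOf_apply_eq {E : Type*} [NormedAddCommGroup E]
    [NormedSpace ℝ E] [MeasurableSpace E] [BorelSpace E] [FiniteDimensional ℝ E] (μ : Measure E)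
    [μ.IsAddHaarMeasure] (ℓ : E →ₗ[ℝ] ℝ) {x₀ : E} (hx₀ : ℓ x₀ ≠ 0) :
    μ {x | ℓ x = ℓ x₀} = 0 := by
  have hker : LinearMap.ker ℓ ≠ ⊤ := fun h => hx₀ (h ▸ Submodule.mem_top : x₀ ∈ LinearMap.ker ℓ)
  have hsub : {x | ℓ x = ℓ x₀} ⊆ x₀ +ᵥ (LinearMap.ker ℓ : Set E) :=
    fun x hx => ⟨x - x₀, by simpa [sub_eq_zero] using hx, by simp⟩
  refine measure_mono_null hsub ?_
  rw [measure_vadd]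
  exact addHaar_submodule μ _ hker

theorem EuclideanSpace.volume_unitCube (ι : Type*) [Fintype ι] :
    volume {x : EuclideanSpace ℝ ι | ∀ i, x i ∈ Set.Icc (0 : ℝ) 1} = 1 := by
  simpa [Real.volume_Icc_pi, Set.preimage, Pi.le_def, forall_and] using
    (PiLp.volume_preserving_ofLp ι).measure_preimage
      (s := Set.Icc (0 : ι → ℝ) 1) measurableSet_Icc.nullMeasurableSet

instance fact_finrank_E2 : Fact (finrank ℝ E2 = 2) := ⟨finrank_euclideanSpace_fin⟩

def stdOrientation : Orientation ℝ E2 (Fin 2) :=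
  (EuclideanSpace.basisFun (Fin 2) ℝ).toBasis.orientation

local notation "ω" => stdOrientation.areaForm

namespace EuclideanSpace

theorem convexHull_range_zero_single_single :
    convexHull ℝ (Set.range ![(0 : E2), single 0 1, single 1 1])
      = {x : E2 | 0 ≤ x 0 ∧ 0 ≤ x 1 ∧ x 0 + x 1 ≤ 1} := by
  apply subset_antisymm
  · refine convexHull_min ?_ ?_
    · rintro _ ⟨i, rfl⟩
      fin_cases i <;> simp
    · rintro x ⟨hx0, hx1, hx⟩ y ⟨hy0, hy1, hy⟩ a b ha hb hab
      simp only [Set.mem_ofPred_eq, PiLp.add_apply, PiLp.smul_apply, smul_eq_mul]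
      refine ⟨by positivity, by positivity, ?_⟩
      nlinarith [mul_le_mul_of_nonneg_left hx ha, mul_le_mul_of_nonneg_left hy hb]
  · rintro x ⟨hx0, hx1, hx⟩
    refine mem_convexHull_of_exists_fintype ![1 - x 0 - x 1, x 0, x 1]
      ![0, single 0 1, single 1 1] ?_ ?_ Set.mem_range_self ?_
    · intro i
      fin_cases i <;>
        simp only [Fin.zero_eta, Fin.mk_one, Fin.reduceFinMk, Fin.isValue, Matrix.cons_val_zero,
          Matrix.cons_val_one, Matrix.cons_val] <;>
        linarith
    · simp only [Fin.sum_univ_three, Fin.isValue, Matrix.cons_val_zero, Matrix.cons_val_one,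
        Matrix.cons_val]
      ring
    · ext i
      fin_cases i <;> simp [Fin.sum_univ_three]

/-- The reflection `x ↦ (1, 1) - x` carries the triangle onto the other half of the unit
square, and the two halves meet in a null segment. -/
theorem volume_stdTriangle : volume {x : E2 | 0 ≤ x 0 ∧ 0 ≤ x 1 ∧ x 0 + x 1 ≤ 1} = 2⁻¹ := by
  set S := {x : E2 | 0 ≤ x 0 ∧ 0 ≤ x 1 ∧ x 0 + x 1 ≤ 1}
  set S' := {x : E2 | x 0 ≤ 1 ∧ x 1 ≤ 1 ∧ 1 ≤ x 0 + x 1}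
  have hS'S : volume S' = volume S := by
    have hS' : S' = (fun x => !₂[1, 1] - x) ⁻¹' S := by
      ext x
      simp only [S, S', Set.mem_preimage, Set.mem_ofPred_eq, PiLp.sub_apply, Matrix.cons_val_zero,
        Matrix.cons_val_one, Matrix.cons_val_fin_one, sub_nonneg]
      constructor <;> rintro ⟨h0, h1, h⟩ <;> exact ⟨h0, h1, by linarith⟩
    rw [hS']
    exact (Measure.measurePreserving_sub_left volume _).measure_preimage
      (by measurability : MeasurableSet S).nullMeasurableSet
  have hunion : S ∪ S' = {x : E2 | ∀ i, x i ∈ Set.Icc (0 : ℝ) 1} := by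
    ext x
    simp only [S, S', Set.mem_union, Set.mem_ofPred_eq, Fin.forall_fin_two, Set.mem_Icc]
    constructor
    · rintro (h | h) <;> refine ⟨⟨?_, ?_⟩, ?_, ?_⟩ <;> linarith
    · rintro ⟨⟨h0, h2⟩, h1, h3⟩
      by_cases h : x 0 + x 1 ≤ 1
      · exact Or.inl ⟨h0, h1, h⟩
      · exact Or.inr ⟨h2, h3, by linarith⟩
  let ℓ : E2 →ₗ[ℝ] ℝ := (proj 0 + proj 1 : E2 →L[ℝ] ℝ)
  have hℓ (x : E2) : ℓ x = x 0 + x 1 := rfl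
  have hℓ₀ : ℓ (single 0 1) = 1 := by simp [hℓ]
  have hinter : S ∩ S' ⊆ {x | ℓ x = ℓ (single 0 1)} :=
    fun x ⟨⟨_, _, h⟩, _, _, h'⟩ => (hℓ x).trans ((le_antisymm h h').trans hℓ₀.symm)
  have hline := Measure.addHaar_setOf_apply_eq volume ℓ (hℓ₀ ▸ one_ne_zero)
  have := measure_union_add_inter₀ S (by measurability : MeasurableSet S').nullMeasurableSet
    (μ := volume)
  rw [hunion, volume_unitCube, measure_mono_null hinter hline, add_zero, hS'S, ← two_mul] at this
  exact ENNReal.eq_inv_of_mul_eq_one_left (by rw [mul_comm]; exact this.symm)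

theorem volume_convexHull_range (p : Fin 3 → E2) :
    volume (convexHull ℝ (Set.range p)) = ENNReal.ofReal |ω (p 1 - p 0) (p 2 - p 0)| * 2⁻¹ := by
  let e := (basisFun (Fin 2) ℝ).toBasis
  let L : E2 →ₗ[ℝ] E2 := e.constr ℝ ![p 1 - p 0, p 2 - p 0]
  have hL : ⇑L ∘ ⇑e = ![p 1 - p 0, p 2 - p 0] := by
    funext i
    simp [L]
  have hdet : LinearMap.det L = ω (p 1 - p 0) (p 2 - p 0) := by
    rw [Orientation.areaForm_to_volumeForm,
      stdOrientation.volumeForm_robust (basisFun (Fin 2) ℝ) rfl, ← hL, Basis.det_comp,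
      Basis.det_self, mul_one]
  have himage : convexHull ℝ (Set.range p)
      = p 0 +ᵥ L '' convexHull ℝ (Set.range ![0, single 0 1, single 1 1]) := by
    rw [L.image_convexHull, ← convexHull_vadd, ← Set.range_comp, Set.vadd_set_range]
    congr 2
    funext i
    fin_cases i <;> simp [L, e]
  rw [himage, measure_vadd, Measure.addHaar_image_linearMap, convexHull_range_zero_single_single,
    volume_stdTriangle, hdet]

end EuclideanSpace

theorem Tri.area_eq (t : Tri) :
    t.area = |ω (t.vtx 1 - t.vtx 0) (t.vtx 2 - t.vtx 0)| / 2 := by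
  rw [Tri.area, Tri.carrier, EuclideanSpace.volume_convexHull_range, ENNReal.toReal_mul,
    ENNReal.toReal_ofReal (abs_nonneg _), ENNReal.toReal_inv, ENNReal.toReal_ofNat, div_eq_mul_inv]

/-- **Divergence formula for affine vector fields on a triangle**: for a nondegenerate
triangle `K` with edges `σ_i` (of length `|σ_i|`, midpoint `x_{σ_i}` and outward unit
normal `n_i`, the unit normal of the edge pointing away from the opposite vertex) and
every affine map `v(x) = A x + b` (whose divergence is `trace A`), one has
`|K| div v = ∑ i, |σ_i| v(x_{σ_i})·n_i`. -/
theorem affine_divergence_formula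
    (t : Tri) (nrm : Fin 3 → E2)
    (hunit : ∀ i, ‖nrm i‖ = 1)
    (horth : ∀ i, ⟪nrm i, t.vtx (i + 1) - t.vtx (i + 2)⟫ = 0)
    (hout : ∀ i, 0 < ⟪nrm i, midpoint ℝ (t.vtx (i + 1)) (t.vtx (i + 2)) - t.vtx i⟫)
    (A : E2 →ₗ[ℝ] E2) (b : E2) (v : E2 → E2) (hv : ∀ x, v x = A x + b) :
    t.area * LinearMap.trace ℝ E2 A = ∑ i : Fin 3,
      dist (t.vtx (i + 1)) (t.vtx (i + 2)) *
        ⟪v (midpoint ℝ (t.vtx (i + 1)) (t.vtx (i + 2))), nrm i⟫ := by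
  have hD := stdOrientation.areaForm_sub_midpoint_sub t.vtx
  generalize hDdef : ω (t.vtx 1 - t.vtx 0) (t.vtx 2 - t.vtx 0) = D at hD
  have hD0 : D ≠ 0 := by
    rw [← abs_pos, ← hD 0,
      stdOrientation.abs_areaForm_eq_norm_mul_inner (hunit 0) (horth 0) (hout 0)]
    exact mul_pos (norm_pos_iff.2 (sub_ne_zero.2 (t.indep.injective.ne (by decide)))) (hout 0)
  have hedge (i : Fin 3) := hD i ▸
    stdOrientation.abs_areaForm_mul_norm_mul_inner (v (midpoint ℝ (t.vtx (i + 1)) (t.vtx (i + 2))))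
      (hunit i) (horth i) (hout i)
  apply mul_left_cancel₀ (abs_ne_zero.2 hD0)
  rw [t.area_eq, hDdef, Finset.mul_sum]
  simp only [dist_eq_norm, hedge]
  rw [← Finset.mul_sum]
  simp only [hv, stdOrientation.sum_areaForm_sub_map_midpoint_add, hDdef]
  linear_combination (LinearMap.trace ℝ E2 A / 2) * abs_mul_abs_self D
end
end
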